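/- Let initial data ρ_{o,j} ∈ L∞(ℝ; [0,1]) for j = 1,…,M, and assume the CFL condition λ·𝒱 ≤ 1/2. Then all values ρ^n_{j,k} (and the intermediate values ρ^{n+1/2}_{j,k}) produced by the modified Godunov scheme with nonlocal flux and operator splitting lie in the interval [0,1]; in particular, the set [0,1]^M is invariant for the modified scheme. -/
import Mathlib


open scoped BigOperators ENNReal
open MeasureTheory

noncomputable def src (M : ℕ) (v : ℕ → ℝ → ℝ) (j : ℕ) (u w U W : ℝ) : ℝ :=
  if 1 ≤ j ∧ j + 1 ≤ M then
    max (v (j + 1) W - v j U) 0 * u * (1 - w)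
      - max (-(v (j + 1) W - v j U)) 0 * w * (1 - u)
  else 0

noncomputable def gam (dx : ℝ) (w : ℝ → ℝ) (h : ℤ) : ℝ :=
  ∫ y in ((h : ℝ) * dx)..(((h : ℝ) + 1) * dx), w y

noncomputable def Hset (dx : ℝ) (w : ℝ → ℝ) : Finset ℤ :=
  Finset.Icc ⌊sInf (tsupport w) / dx⌋ (⌊sSup (tsupport w) / dx⌋ - 1)

noncomputable def dconv (dx : ℝ) (w : ℝ → ℝ) (r : ℤ → ℝ) (k : ℤ) : ℝ :=
  ∑ h ∈ Hset dx w, gam dx w h * r (k + h + 1)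

lemma integrable_of_int_one {w : ℝ → ℝ} (h : (∫ x, w x) = 1) : Integrable w := by
  by_contra hc
  rw [integral_undef hc] at h; norm_num at h

lemma gam_nonneg {dx : ℝ} (hdx : 0 ≤ dx) {w : ℝ → ℝ} (hw : ∀ x, 0 ≤ w x) (h : ℤ) :
    0 ≤ gam dx w h := by
  apply intervalIntegral.integral_nonneg (by nlinarith) (fun u _ => hw u)

lemma gam_eq {dx : ℝ} (hdx : 0 ≤ dx) (w : ℝ → ℝ) (h : ℤ) :
    gam dx w h = ∫ y in Set.Ioc ((h:ℝ)*dx) (((h:ℝ)+1)*dx), w y :=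
  intervalIntegral.integral_of_le (by nlinarith)

lemma gam_le_one {dx : ℝ} (hdx : 0 ≤ dx) {w : ℝ → ℝ} (hw : ∀ x, 0 ≤ w x)
    (hint : Integrable w) (hone : (∫ x, w x) = 1) (h : ℤ) : gam dx w h ≤ 1 := by
  rw [gam_eq hdx w h, ← hone]
  exact setIntegral_le_integral hint (Filter.Eventually.of_forall hw)

lemma sum_gam_le_one {dx : ℝ} (hdx : 0 ≤ dx) {w : ℝ → ℝ} (hw : ∀ x, 0 ≤ w x)
    (hint : Integrable w) (hone : (∫ x, w x) = 1) (s : Finset ℤ) :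
    ∑ h ∈ s, gam dx w h ≤ 1 := by
  have hsum : ∑ h ∈ s, gam dx w h
      = ∫ y in ⋃ h ∈ s, Set.Ioc ((h:ℝ)*dx) (((h:ℝ)+1)*dx), w y := by
    rw [integral_biUnion_finset s (fun i _ => measurableSet_Ioc)]
    · exact Finset.sum_congr rfl (fun h _ => gam_eq hdx w h)
    · intro a _ b _ hab
      simp only [Function.onFun]
      rw [Set.Ioc_disjoint_Ioc]
      rcases lt_or_gt_of_ne hab with hl | hl
      · have h1 : ((a:ℝ)+1) ≤ (b:ℝ) := by exact_mod_cast hl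
        have h2 : ((a:ℝ)+1)*dx ≤ (b:ℝ)*dx := by nlinarith
        exact le_trans (min_le_left _ _) (le_trans h2 (le_max_right _ _))
      · have h1 : ((b:ℝ)+1) ≤ (a:ℝ) := by exact_mod_cast hl
        have h2 : ((b:ℝ)+1)*dx ≤ (a:ℝ)*dx := by nlinarith
        exact le_trans (min_le_right _ _) (le_trans h2 (le_max_left _ _))
    · exact fun i _ => hint.integrableOn
  rw [hsum, ← hone]
  exact setIntegral_le_integral hint (Filter.Eventually.of_forall hw)

lemma abel_bound (γ s : ℕ → ℝ) (hγm : ∀ i, γ (i+1) ≤ γ i)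
    (hs1 : ∀ i, s i ≤ 1) :
    ∀ n : ℕ, 1 ≤ n →
      (∑ i ∈ Finset.range n, γ i * s (i+1)) - (∑ i ∈ Finset.range n, γ i * s i)
        ≤ γ 0 * (1 - s 0) - γ (n-1) * (1 - s n) := by
  intro n hn
  induction n, hn using Nat.le_induction with
  | base => simp [Finset.sum_range_one]; linarith [hs1 0, hs1 1]
  | succ n hn ih =>
    rw [Finset.sum_range_succ, Finset.sum_range_succ]
    have h1 : γ n ≤ γ (n-1) := by
      have h3 : n - 1 + 1 = n := by omega
      calc γ n = γ (n-1+1) := by rw [h3]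
      _ ≤ γ (n-1) := hγm _
    have h2 : (n + 1) - 1 = n := by omega
    rw [h2]
    nlinarith [hs1 n, hs1 (n+1), ih]

lemma sum_Icc_int (B : ℤ) (hB : 0 ≤ B) (f : ℤ → ℝ) :
    ∑ h ∈ Finset.Icc (0:ℤ) B, f h = ∑ i ∈ Finset.range (B.toNat + 1), f (i:ℤ) := by
  refine Finset.sum_nbij' (fun h => h.toNat) (fun i => (i:ℤ)) ?_ ?_ ?_ ?_ ?_
  · intro a ha; simp only [Finset.mem_Icc] at ha; simp only [Finset.mem_range]; omega
  · intro i hi; simp only [Finset.mem_range] at hi; simp only [Finset.mem_Icc]; omega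
  · intro a ha; simp only [Finset.mem_Icc] at ha
    simp [Int.toNat_of_nonneg ha.1]
  · intro i _; simp
  · intro a ha; simp only [Finset.mem_Icc] at ha
    congr 1
    exact (Int.toNat_of_nonneg ha.1).symm

lemma abel_int (γ : ℤ → ℝ) (r : ℤ → ℝ) (k : ℤ)
    (hγ0 : ∀ h : ℤ, 0 ≤ γ h) (hγm : ∀ i : ℕ, γ ((i:ℤ)+1) ≤ γ (i:ℤ))
    (hr1 : ∀ m : ℤ, r m ≤ 1) (B : ℤ) (hB : 0 ≤ B) :
    (∑ h ∈ Finset.Icc (0:ℤ) B, γ h * r (k + h + 1))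
      - (∑ h ∈ Finset.Icc (0:ℤ) B, γ h * r (k - 1 + h + 1)) ≤ γ 0 * (1 - r k) := by
  set γ' : ℕ → ℝ := fun i => γ (i:ℤ) with hγ'
  set s : ℕ → ℝ := fun i => r (k + (i:ℤ)) with hs
  set n := B.toNat + 1 with hn
  have e1 : ∑ h ∈ Finset.Icc (0:ℤ) B, γ h * r (k + h + 1)
      = ∑ i ∈ Finset.range n, γ' i * s (i+1) := by
    rw [sum_Icc_int B hB]
    refine Finset.sum_congr rfl (fun i _ => ?_)
    simp only [hγ', hs]
    congr 2
    push_cast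
    ring
  have e2 : ∑ h ∈ Finset.Icc (0:ℤ) B, γ h * r (k - 1 + h + 1)
      = ∑ i ∈ Finset.range n, γ' i * s i := by
    rw [sum_Icc_int B hB]
    refine Finset.sum_congr rfl (fun i _ => ?_)
    simp only [hγ', hs]
    congr 2
    ring
  have hγm' : ∀ i : ℕ, γ' (i+1) ≤ γ' i := by
    intro i
    simp only [hγ']
    push_cast
    exact hγm i
  have habel := abel_bound γ' s hγm' (fun i => hr1 _) n (by omega)
  have hlast : 0 ≤ γ' (n-1) * (1 - s n) := mul_nonneg (hγ0 _) (by linarith [hr1 (k + (n:ℤ))])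
  have h0 : γ' 0 = γ 0 := by simp [hγ']
  have hs0 : s 0 = r k := by simp [hs]
  rw [e1, e2]
  rw [h0, hs0] at habel
  linarith

lemma gam_antitone {dx ι : ℝ} (hdx : 0 < dx) {wι : ℝ → ℝ}
    (hnn : ∀ x, 0 ≤ wι x) (hanti : AntitoneOn wι (Set.Icc 0 ι))
    (hsupp : Function.support wι ⊆ Set.Icc 0 ι) (hint : Integrable wι) (i : ℕ) :
    gam dx wι ((i:ℤ)+1) ≤ gam dx wι (i:ℤ) := by
  have hzero : ∀ y : ℝ, y ∉ Set.Icc 0 ι → wι y = 0 := by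
    intro y hy
    by_contra h
    exact hy (hsupp h)
  have hpt : ∀ y ∈ Set.Icc ((i:ℝ)*dx) (((i:ℝ)+1)*dx), wι (y + dx) ≤ wι y := by
    intro y hy
    have hy0 : 0 ≤ y := le_trans (by positivity) hy.1
    by_cases hyι : y ≤ ι
    · by_cases hydι : y + dx ≤ ι
      · exact hanti ⟨hy0, hyι⟩ ⟨by linarith, hydι⟩ (by linarith)
      · rw [hzero (y+dx) (by simp only [Set.mem_Icc]; push_neg; intro; linarith)]
        exact hnn y
    · rw [hzero (y+dx) (by simp only [Set.mem_Icc]; push_neg; intro; linarith),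
        hzero y (by simp only [Set.mem_Icc]; push_neg; intro; linarith)]
  have hcomp : gam dx wι ((i:ℤ)+1) = ∫ y in ((i:ℝ)*dx)..(((i:ℝ)+1)*dx), wι (y + dx) := by
    rw [intervalIntegral.integral_comp_add_right]
    unfold gam
    push_cast
    ring_nf
  rw [hcomp]
  unfold gam
  apply intervalIntegral.integral_mono_on (by nlinarith)
  · exact (hint.comp_add_right dx).intervalIntegrable
  · exact hint.intervalIntegrable
  · exact hpt

lemma sInf_tsupport_eq_zero {ι : ℝ} (hι : 0 < ι) {wι : ℝ → ℝ}
    (hnn : ∀ x, 0 ≤ wι x) (hanti : AntitoneOn wι (Set.Icc 0 ι))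
    (hsupp : Function.support wι ⊆ Set.Icc 0 ι) (hone : (∫ x, wι x) = 1) :
    sInf (tsupport wι) = 0 := by
  have hts : tsupport wι ⊆ Set.Icc 0 ι := closure_minimal hsupp isClosed_Icc
  have h0 : ∀ x ∈ tsupport wι, (0:ℝ) ≤ x := fun x hx => (hts hx).1
  have hge : (0:ℝ) ≤ sInf (tsupport wι) := Real.sInf_nonneg h0
  by_contra hne
  have hc : 0 < sInf (tsupport wι) := lt_of_le_of_ne hge (Ne.symm hne)
  set c := sInf (tsupport wι) with hcdef
  have hbdd : BddBelow (tsupport wι) := ⟨0, h0⟩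
  have hlt : ∀ x : ℝ, x < c → wι x = 0 := by
    intro x hx
    by_contra h
    have : x ∈ tsupport wι := subset_closure (by simpa [Function.mem_support] using h)
    exact absurd (csInf_le hbdd this) (by linarith)
  have hzero : ∀ y : ℝ, y ≠ 0 → wι y = 0 := by
    intro y hy
    by_cases hmem : y ∈ Set.Icc 0 ι
    · have hy0 : 0 < y := lt_of_le_of_ne hmem.1 (Ne.symm hy)
      by_cases hyc : y < c
      · exact hlt y hyc
      · push_neg at hyc
        set x := min c y / 2 with hxdef
        have hx0 : 0 < x := by
          have := lt_min hc hy0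
          positivity
        have hxc : x < c := by
          have h1 : min c y ≤ c := min_le_left _ _
          simp only [hxdef]; linarith
        have hxy : x ≤ y := by
          have h1 : min c y ≤ y := min_le_right _ _
          simp only [hxdef]; linarith
        have hxι : x ≤ ι := le_trans hxy hmem.2
        have := hanti ⟨le_of_lt hx0, hxι⟩ hmem hxy
        rw [hlt x hxc] at this
        exact le_antisymm this (hnn y)
    · by_contra h
      exact hmem (hsupp h)
  have hae : wι =ᵐ[volume] (0 : ℝ → ℝ) := by
    have hsub : {x : ℝ | wι x ≠ 0} ⊆ {(0:ℝ)} := by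
      intro x hx
      simp only [Set.mem_setOf_eq] at hx
      by_contra hx0
      exact hx (hzero x (by simpa using hx0))
    refine Filter.eventuallyEq_iff_exists_mem.2 ⟨{x : ℝ | wι x = 0}, ?_, fun x hx => hx⟩
    rw [mem_ae_iff]
    refine measure_mono_null ?_ (Real.volume_singleton (a := (0:ℝ)))
    intro x hx
    simp only [Set.mem_compl_iff, Set.mem_setOf_eq] at hx
    exact hsub hx
  rw [integral_congr_ae hae] at hone
  simp at hone

lemma relax_alg (dt Vmax Ap Am Bp Bm u r w' : ℝ)
    (hdt : 0 ≤ dt) (hV : dt * Vmax ≤ 1/2)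
    (hAp : 0 ≤ Ap) (hAp' : Ap ≤ Vmax) (hAm : 0 ≤ Am) (hAm' : Am ≤ Vmax)
    (hBp : 0 ≤ Bp) (hBp' : Bp ≤ Vmax) (hBm : 0 ≤ Bm) (hBm' : Bm ≤ Vmax)
    (hu0 : 0 ≤ u) (hu1 : u ≤ 1) (hr0 : 0 ≤ r) (hr1 : r ≤ 1)
    (hw0 : 0 ≤ w') (hw1 : w' ≤ 1) :
    r + dt * (Ap * u * (1 - r) - Am * r * (1 - u))
      - dt * (Bp * r * (1 - w') - Bm * w' * (1 - r)) ∈ Set.Icc (0:ℝ) 1 := by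
  have hVnn : 0 ≤ Vmax := le_trans hAp hAp'
  have e3 : Am * (1-u) ≤ Vmax := by nlinarith
  have e4 : Bp * (1-w') ≤ Vmax := by nlinarith
  have e5 : 0 ≤ Am * (1-u) := by nlinarith
  have e6 : 0 ≤ Bp * (1-w') := by nlinarith
  have e3' : Ap * u ≤ Vmax := by nlinarith
  have e4' : Bm * w' ≤ Vmax := by nlinarith
  have e5' : 0 ≤ Ap * u := by nlinarith
  have e6' : 0 ≤ Bm * w' := by nlinarith
  have hd1 : dt * (Am * (1-u)) ≤ 1/2 := le_trans (mul_le_mul_of_nonneg_left e3 hdt) hV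
  have hd2 : dt * (Bp * (1-w')) ≤ 1/2 := le_trans (mul_le_mul_of_nonneg_left e4 hdt) hV
  have hd3 : dt * (Ap * u) ≤ 1/2 := le_trans (mul_le_mul_of_nonneg_left e3' hdt) hV
  have hd4 : dt * (Bm * w') ≤ 1/2 := le_trans (mul_le_mul_of_nonneg_left e4' hdt) hV
  constructor
  · have h7 : 0 ≤ r * (1 - dt * (Am * (1-u) + Bp * (1-w'))) :=
      mul_nonneg hr0 (by linarith [hd1, hd2])
    have h8 : 0 ≤ dt * (1-r) * (Ap * u) :=
      mul_nonneg (mul_nonneg hdt (by linarith)) e5'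
    have h9 : 0 ≤ dt * (1-r) * (Bm * w') :=
      mul_nonneg (mul_nonneg hdt (by linarith)) e6'
    linarith [h7, h8, h9]
  · have h7 : 0 ≤ (1-r) * (1 - dt * (Ap * u + Bm * w')) :=
      mul_nonneg (by linarith) (by linarith [hd3, hd4])
    have h8 : 0 ≤ dt * r * (Am * (1-u)) := mul_nonneg (mul_nonneg hdt hr0) e5
    have h9 : 0 ≤ dt * r * (Bp * (1-w')) := mul_nonneg (mul_nonneg hdt hr0) e6
    linarith [h7, h8, h9]

lemma relax_preserve (M : ℕ) (v : ℕ → ℝ → ℝ) (dt Vmax : ℝ)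
    (hdt : 0 ≤ dt) (hVnn : 0 ≤ Vmax) (hdtV : dt * Vmax ≤ 1/2)
    (hv_nonneg : ∀ j ∈ Finset.Icc 1 M, ∀ x ∈ Set.Icc (0:ℝ) 1, 0 ≤ v j x)
    (hVmax : ∀ j ∈ Finset.Icc 1 M, ∀ x ∈ Set.Icc (0:ℝ) 1, |v j x| ≤ Vmax)
    (j : ℕ) (hj1 : 1 ≤ j) (hjM : j ≤ M)
    (u r w' U W W' : ℝ)
    (hr : r ∈ Set.Icc (0:ℝ) 1) (hW : W ∈ Set.Icc (0:ℝ) 1)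
    (hu : 2 ≤ j → u ∈ Set.Icc (0:ℝ) 1) (hU : 2 ≤ j → U ∈ Set.Icc (0:ℝ) 1)
    (hw' : j + 1 ≤ M → w' ∈ Set.Icc (0:ℝ) 1) (hW' : j + 1 ≤ M → W' ∈ Set.Icc (0:ℝ) 1) :
    r + dt * src M v (j-1) u r U W - dt * src M v j r w' W W' ∈ Set.Icc (0:ℝ) 1 := by
  have hjmem : j ∈ Finset.Icc 1 M := Finset.mem_Icc.2 ⟨hj1, hjM⟩
  have hbnd : ∀ i ∈ Finset.Icc 1 M, ∀ x ∈ Set.Icc (0:ℝ) 1,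
      0 ≤ v i x ∧ v i x ≤ Vmax := by
    intro i hi x hx
    exact ⟨hv_nonneg i hi x hx, le_trans (le_abs_self _) (hVmax i hi x hx)⟩
  by_cases hg1 : 2 ≤ j
  · have hj1' : j - 1 + 1 = j := by omega
    have hguard1 : 1 ≤ j - 1 ∧ (j-1) + 1 ≤ M := by omega
    have hjm1mem : j - 1 ∈ Finset.Icc 1 M := Finset.mem_Icc.2 ⟨by omega, by omega⟩
    have hUm := hU hg1
    have hum := hu hg1
    have hA1 := hbnd j hjmem W hW
    have hA2 := hbnd (j-1) hjm1mem U hUm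
    by_cases hg2 : j + 1 ≤ M
    · have hguard2 : 1 ≤ j ∧ j + 1 ≤ M := ⟨hj1, hg2⟩
      have hjp1mem : j + 1 ∈ Finset.Icc 1 M := Finset.mem_Icc.2 ⟨by omega, hg2⟩
      have hW'm := hW' hg2
      have hw'm := hw' hg2
      have hB1 := hbnd (j+1) hjp1mem W' hW'm
      have hB2 := hbnd j hjmem W hW
      rw [src, src, if_pos hguard1, if_pos hguard2, hj1']
      exact relax_alg dt Vmax (max (v j W - v (j-1) U) 0) (max (-(v j W - v (j-1) U)) 0)
        (max (v (j+1) W' - v j W) 0) (max (-(v (j+1) W' - v j W)) 0) u r w'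
        hdt hdtV (le_max_right _ _) (max_le (by linarith [hA1.2, hA2.1]) hVnn)
        (le_max_right _ _) (max_le (by linarith [hA1.1, hA2.2]) hVnn)
        (le_max_right _ _) (max_le (by linarith [hB1.2, hB2.1]) hVnn)
        (le_max_right _ _) (max_le (by linarith [hB1.1, hB2.2]) hVnn)
        hum.1 hum.2 hr.1 hr.2 hw'm.1 hw'm.2
    · have hguard2 : ¬(1 ≤ j ∧ j + 1 ≤ M) := by omega
      rw [src, src, if_pos hguard1, if_neg hguard2, hj1']
      have := relax_alg dt Vmax (max (v j W - v (j-1) U) 0) (max (-(v j W - v (j-1) U)) 0)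
        0 0 u r 0
        hdt hdtV (le_max_right _ _) (max_le (by linarith [hA1.2, hA2.1]) hVnn)
        (le_max_right _ _) (max_le (by linarith [hA1.1, hA2.2]) hVnn)
        le_rfl hVnn le_rfl hVnn
        hum.1 hum.2 hr.1 hr.2 le_rfl (by norm_num : (0:ℝ) ≤ 1)
      simpa using this
  · have hguard1 : ¬(1 ≤ j - 1 ∧ (j-1) + 1 ≤ M) := by omega
    by_cases hg2 : j + 1 ≤ M
    · have hguard2 : 1 ≤ j ∧ j + 1 ≤ M := ⟨hj1, hg2⟩
      have hjp1mem : j + 1 ∈ Finset.Icc 1 M := Finset.mem_Icc.2 ⟨by omega, hg2⟩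
      have hW'm := hW' hg2
      have hw'm := hw' hg2
      have hB1 := hbnd (j+1) hjp1mem W' hW'm
      have hB2 := hbnd j hjmem W hW
      rw [src, src, if_neg hguard1, if_pos hguard2]
      have := relax_alg dt Vmax 0 0
        (max (v (j+1) W' - v j W) 0) (max (-(v (j+1) W' - v j W)) 0) 0 r w'
        hdt hdtV le_rfl hVnn le_rfl hVnn
        (le_max_right _ _) (max_le (by linarith [hB1.2, hB2.1]) hVnn)
        (le_max_right _ _) (max_le (by linarith [hB1.1, hB2.2]) hVnn)
        le_rfl (by norm_num : (0:ℝ) ≤ 1) hr.1 hr.2 hw'm.1 hw'm.2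
      simpa using this
    · have hguard2 : ¬(1 ≤ j ∧ j + 1 ≤ M) := by omega
      rw [src, src, if_neg hguard1, if_neg hguard2]
      simpa using hr

theorem modified_scheme_invariance
    (M : ℕ) (hM : 2 ≤ M)
    (v : ℕ → ℝ → ℝ)
    (dx dt ν ι Vmax V'max : ℝ)
    (w wι : ℝ → ℝ)
    (ρ₀ : ℕ → ℝ → ℝ) (ρ ρh : ℕ → ℕ → ℤ → ℝ)
    (hdx : dx ∈ Set.Ioo (0 : ℝ) 1) (hdt : 0 < dt) (hν : 0 < ν) (hι : 0 < ι)
    (hw_cont : ContinuousOn w (Set.Icc (-ν) ν))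
    (hw_nonneg : ∀ x, 0 ≤ w x)
    (hw_supp : Function.support w ⊆ Set.Icc (-ν) ν)
    (hw_int : ∫ x, w x = 1)
    (hwι_smooth : ContDiffOn ℝ 1 wι (Set.Icc 0 ι))
    (hwι_nonneg : ∀ x, 0 ≤ wι x)
    (hwι_anti : AntitoneOn wι (Set.Icc 0 ι))
    (hwι_supp : Function.support wι ⊆ Set.Icc 0 ι)
    (hwι_int : ∫ x, wι x = 1)
    (hv_anti : ∀ j ∈ Finset.Icc 1 M, StrictAntiOn (v j) (Set.Icc (0 : ℝ) 1))
    (hv_nonneg : ∀ j ∈ Finset.Icc 1 M, ∀ x ∈ Set.Icc (0 : ℝ) 1, 0 ≤ v j x)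
    (hv_one : ∀ j ∈ Finset.Icc 1 M, v j 1 = 0)
    (hVmax : ∀ j ∈ Finset.Icc 1 M, ∀ x ∈ Set.Icc (0 : ℝ) 1, |v j x| ≤ Vmax)
    (hV'nonneg : 0 ≤ V'max)
    (hLip : ∀ j ∈ Finset.Icc 1 M,
      LipschitzOnWith (Real.toNNReal V'max) (v j) (Set.Icc (0 : ℝ) 1))
    (hCFL : dt / dx * (Vmax + V'max) ≤ 1 / 2)
    (hρ₀mem : ∀ j ∈ Finset.Icc 1 M, ∀ x, ρ₀ j x ∈ Set.Icc (0 : ℝ) 1)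
    (hmeas : ∀ j ∈ Finset.Icc 1 M, Measurable (ρ₀ j))
    (hinit : ∀ j ∈ Finset.Icc 1 M, ∀ k : ℤ,
      ρ 0 j k = (∫ x in ((k : ℝ) * dx)..(((k : ℝ) + 1) * dx), ρ₀ j x) / dx)
    (hconvNL : ∀ n : ℕ, ∀ j ∈ Finset.Icc 1 M, ∀ k : ℤ,
      ρh n j k = ρ n j k - dt / dx *
        (v j (dconv dx wι (ρ n j) k) * ρ n j k
          - v j (dconv dx wι (ρ n j) (k - 1)) * ρ n j (k - 1)))
    (hrelax : ∀ n : ℕ, ∀ j ∈ Finset.Icc 1 M, ∀ k : ℤ,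
      ρ (n + 1) j k = ρh n j k
        + dt * src M v (j - 1) (ρh n (j - 1) k) (ρh n j k)
            (dconv dx w (ρh n (j - 1)) k) (dconv dx w (ρh n j) k)
        - dt * src M v j (ρh n j k) (ρh n (j + 1) k)
            (dconv dx w (ρh n j) k) (dconv dx w (ρh n (j + 1)) k))
    :
    ∀ n : ℕ, ∀ j ∈ Finset.Icc 1 M, ∀ k : ℤ,
      ρ n j k ∈ Set.Icc (0 : ℝ) 1 ∧ ρh n j k ∈ Set.Icc (0 : ℝ) 1 := by
  obtain ⟨hdx0, hdx1⟩ := hdx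
  have h1M : (1:ℕ) ∈ Finset.Icc 1 M := Finset.mem_Icc.2 ⟨le_refl 1, by omega⟩
  have hVnn : 0 ≤ Vmax :=
    le_trans (abs_nonneg _) (hVmax 1 h1M 0 (by norm_num))
  have hLnn : 0 ≤ dt / dx := le_of_lt (div_pos hdt hdx0)
  have hwint : Integrable w := integrable_of_int_one hw_int
  have hwιint : Integrable wι := integrable_of_int_one hwι_int
  have hdtV : dt * Vmax ≤ 1/2 := by
    have h1 : dt / dx * Vmax ≤ 1/2 := by nlinarith [mul_nonneg hLnn hV'nonneg]
    have heq : dt * Vmax = dt / dx * Vmax * dx := by field_simp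
    rw [heq]
    nlinarith [mul_le_mul_of_nonneg_right h1 hdx0.le, mul_nonneg hLnn hVnn]
  -- discrete convolutions stay in [0,1]
  have hdconv : ∀ (ker : ℝ → ℝ), (∀ x, 0 ≤ ker x) → Integrable ker → (∫ x, ker x) = 1 →
      ∀ (r : ℤ → ℝ), (∀ m : ℤ, r m ∈ Set.Icc (0:ℝ) 1) → ∀ k : ℤ,
        dconv dx ker r k ∈ Set.Icc (0:ℝ) 1 := by
    intro ker hknn hkint hkone r hr k
    unfold dconv
    constructor
    · apply Finset.sum_nonneg
      intro h _
      exact mul_nonneg (gam_nonneg hdx0.le hknn h) (hr _).1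
    · calc ∑ h ∈ Hset dx ker, gam dx ker h * r (k+h+1)
          ≤ ∑ h ∈ Hset dx ker, gam dx ker h := Finset.sum_le_sum (fun h _ => by
            nlinarith [gam_nonneg hdx0.le hknn h, (hr (k+h+1)).1, (hr (k+h+1)).2])
      _ ≤ 1 := sum_gam_le_one hdx0.le hknn hkint hkone _
  have hγ0nn : 0 ≤ gam dx wι 0 := gam_nonneg hdx0.le hwι_nonneg 0
  have hγ01 : gam dx wι 0 ≤ 1 := gam_le_one hdx0.le hwι_nonneg hwιint hwι_int 0
  -- key nonlocal convolution difference bound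
  have hkey : ∀ (r : ℤ → ℝ), (∀ m : ℤ, r m ∈ Set.Icc (0:ℝ) 1) → ∀ k : ℤ,
      dconv dx wι r k - dconv dx wι r (k-1) ≤ gam dx wι 0 * (1 - r k) := by
    intro r hr k
    have hHset : Hset dx wι = Finset.Icc 0 (⌊sSup (tsupport wι) / dx⌋ - 1) := by
      unfold Hset
      rw [sInf_tsupport_eq_zero hι hwι_nonneg hwι_anti hwι_supp hwι_int]
      norm_num
    unfold dconv
    rw [hHset]
    set B := ⌊sSup (tsupport wι) / dx⌋ - 1 with hBdef
    rcases lt_or_ge B 0 with hB | hB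
    · rw [Finset.Icc_eq_empty (by omega)]
      simp only [Finset.sum_empty, sub_zero]
      nlinarith [(hr k).2]
    · exact abel_int (gam dx wι) r k (gam_nonneg hdx0.le hwι_nonneg)
        (fun i => gam_antitone hdx0 hwι_nonneg hwι_anti hwι_supp hwιint i)
        (fun m => (hr m).2) B hB
  -- convective step preserves [0,1]
  have hconv_step : ∀ j ∈ Finset.Icc 1 M, ∀ (r : ℤ → ℝ),
      (∀ m : ℤ, r m ∈ Set.Icc (0:ℝ) 1) → ∀ k : ℤ,
      r k - dt / dx * (v j (dconv dx wι r k) * r k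
        - v j (dconv dx wι r (k-1)) * r (k-1)) ∈ Set.Icc (0:ℝ) 1 := by
    intro j hj r hr k
    have hRk : dconv dx wι r k ∈ Set.Icc (0:ℝ) 1 :=
      hdconv wι hwι_nonneg hwιint hwι_int r hr k
    have hRk1 : dconv dx wι r (k-1) ∈ Set.Icc (0:ℝ) 1 :=
      hdconv wι hwι_nonneg hwιint hwι_int r hr (k-1)
    set Rk := dconv dx wι r k with hRkDef
    set Rk1 := dconv dx wι r (k-1) with hRk1Def
    have hvk0 : 0 ≤ v j Rk := hv_nonneg j hj Rk hRk
    have hvkV : v j Rk ≤ Vmax := le_trans (le_abs_self _) (hVmax j hj Rk hRk)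
    have hvk10 : 0 ≤ v j Rk1 := hv_nonneg j hj Rk1 hRk1
    have hvk1V : v j Rk1 ≤ Vmax := le_trans (le_abs_self _) (hVmax j hj Rk1 hRk1)
    have hkb : Rk - Rk1 ≤ gam dx wι 0 * (1 - r k) := hkey r hr k
    have hE : -(V'max * (gam dx wι 0 * (1 - r k))) ≤ v j Rk - v j Rk1 := by
      rcases le_or_gt Rk Rk1 with hle | hlt
      · have hmono : v j Rk1 ≤ v j Rk := by
          rcases eq_or_lt_of_le hle with heq | hlt'
          · rw [heq]
          · exact le_of_lt (hv_anti j hj hRk hRk1 hlt')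
        have hpos : 0 ≤ V'max * (gam dx wι 0 * (1 - r k)) :=
          mul_nonneg hV'nonneg (mul_nonneg hγ0nn (by linarith [(hr k).2]))
        linarith
      · have hd := (hLip j hj).dist_le_mul Rk hRk Rk1 hRk1
        rw [Real.dist_eq, Real.dist_eq, Real.coe_toNNReal _ hV'nonneg] at hd
        rw [abs_of_pos (by linarith : (0:ℝ) < Rk - Rk1)] at hd
        have habs := abs_le.1 hd
        nlinarith [mul_le_mul_of_nonneg_left hkb hV'nonneg, habs.1]
    set L := dt / dx with hLdef
    constructor
    · have hLvk : L * v j Rk ≤ 1/2 := by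
        nlinarith [mul_le_mul_of_nonneg_left hvkV hLnn, mul_nonneg hLnn hV'nonneg]
      have t1 : 0 ≤ r k * (1 - L * v j Rk) := mul_nonneg (hr k).1 (by linarith)
      have t2 : 0 ≤ L * (v j Rk1 * r (k-1)) :=
        mul_nonneg hLnn (mul_nonneg hvk10 (hr (k-1)).1)
      linarith [t1, t2]
    · have hVg : V'max * gam dx wι 0 ≤ V'max := by nlinarith
      have hin : 1 - L * v j Rk - L * (V'max * gam dx wι 0) ≥ 1/2 := by
        have i1 : L * v j Rk ≤ L * Vmax := mul_le_mul_of_nonneg_left hvkV hLnn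
        have i2 : L * (V'max * gam dx wι 0) ≤ L * V'max :=
          mul_le_mul_of_nonneg_left hVg hLnn
        linarith
      have T1 : 0 ≤ (1 - r k) * (1 - L * v j Rk - L * (V'max * gam dx wι 0)) :=
        mul_nonneg (by linarith [(hr k).2]) (by linarith)
      have T2 : 0 ≤ L * ((v j Rk - v j Rk1) + V'max * (gam dx wι 0 * (1 - r k))) :=
        mul_nonneg hLnn (by linarith)
      have T3 : 0 ≤ L * (v j Rk1 * (1 - r (k-1))) :=
        mul_nonneg hLnn (mul_nonneg hvk10 (by linarith [(hr (k-1)).2]))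
      linarith [T1, T2, T3]
  -- base case
  have hbase : ∀ j ∈ Finset.Icc 1 M, ∀ k : ℤ, ρ 0 j k ∈ Set.Icc (0:ℝ) 1 := by
    intro j hj k
    rw [hinit j hj k]
    have hle : (k:ℝ) * dx ≤ ((k:ℝ)+1) * dx := by nlinarith
    have hInt : IntervalIntegrable (ρ₀ j) volume ((k:ℝ)*dx) (((k:ℝ)+1)*dx) := by
      rw [intervalIntegrable_iff_integrableOn_Ioc_of_le hle]
      refine ⟨(hmeas j hj).aestronglyMeasurable.restrict, ?_⟩
      apply HasFiniteIntegral.restrict_of_bounded (C := 1) measure_Ioc_lt_top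
      filter_upwards with x
      rw [Real.norm_eq_abs, abs_le]
      exact ⟨by linarith [(hρ₀mem j hj x).1], (hρ₀mem j hj x).2⟩
    have h0 : 0 ≤ ∫ x in ((k:ℝ)*dx)..(((k:ℝ)+1)*dx), ρ₀ j x :=
      intervalIntegral.integral_nonneg hle (fun x _ => (hρ₀mem j hj x).1)
    have h1 : (∫ x in ((k:ℝ)*dx)..(((k:ℝ)+1)*dx), ρ₀ j x) ≤ dx := by
      have hc : (∫ _x in ((k:ℝ)*dx)..(((k:ℝ)+1)*dx), (1:ℝ)) = dx := by
        rw [intervalIntegral.integral_const]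
        simp
        ring
      calc (∫ x in ((k:ℝ)*dx)..(((k:ℝ)+1)*dx), ρ₀ j x)
          ≤ ∫ _x in ((k:ℝ)*dx)..(((k:ℝ)+1)*dx), (1:ℝ) :=
            intervalIntegral.integral_mono_on hle hInt intervalIntegrable_const
              (fun x _ => (hρ₀mem j hj x).2)
      _ = dx := hc
    constructor
    · exact div_nonneg h0 hdx0.le
    · rw [div_le_one hdx0]; exact h1
  -- main induction on n
  have main : ∀ n : ℕ, ∀ j ∈ Finset.Icc 1 M, ∀ k : ℤ, ρ n j k ∈ Set.Icc (0:ℝ) 1 := by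
    intro n
    induction n with
    | zero => exact hbase
    | succ n ih =>
      have hh : ∀ j ∈ Finset.Icc 1 M, ∀ k : ℤ, ρh n j k ∈ Set.Icc (0:ℝ) 1 := by
        intro j hj k
        rw [hconvNL n j hj k]
        exact hconv_step j hj (ρ n j) (ih j hj) k
      intro j hj k
      rw [hrelax n j hj k]
      obtain ⟨hj1, hjM⟩ := Finset.mem_Icc.1 hj
      exact relax_preserve M v dt Vmax hdt.le hVnn hdtV hv_nonneg hVmax j hj1 hjM
        _ _ _ _ _ _ (hh j hj k)
        (hdconv w hw_nonneg hwint hw_int (ρh n j) (hh j hj) k)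
        (fun h2 => hh (j-1) (Finset.mem_Icc.2 ⟨by omega, by omega⟩) k)
        (fun h2 => hdconv w hw_nonneg hwint hw_int (ρh n (j-1))
          (hh (j-1) (Finset.mem_Icc.2 ⟨by omega, by omega⟩)) k)
        (fun hM' => hh (j+1) (Finset.mem_Icc.2 ⟨by omega, hM'⟩) k)
        (fun hM' => hdconv w hw_nonneg hwint hw_int (ρh n (j+1))
          (hh (j+1) (Finset.mem_Icc.2 ⟨by omega, hM'⟩)) k)
  intro n j hj k
  refine ⟨main n j hj k, ?_⟩
  rw [hconvNL n j hj k]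
  exact hconv_step j hj (ρ n j) (main n j hj) k
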